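/- arXiv:2203.12398 — 5 statements merged into one kernel-verified Lean document; each statement's English description precedes it below -/
import Mathlib

section
/- For every γ ∈ (0, 2) and every real number x ≠ 0, one has ∫₀^∞ θ₁(γ²/8, (γ²/4)iτ) · e^{−πγ²x²τ/4} dτ = 4 sinh(γ²πx/4) / (γ² x cosh(πx)). -/
/-!
Expanding `θ₁` as a series in `e^{-π t (n + 1/2)²}` and integrating term by term turns the
Laplace transform into `∑ (-1)ⁿ sin((n + 1/2) u) / ((n + 1/2)² + x²)` with `u = πγ²/4`. This is
a Fourier series: on `[-π, π]` the function `e^{-iu/2} sinh(xu)` has matching endpoint values and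
Fourier coefficients `(-1)ⁿ (-i) x cosh(πx) / (π ((n + 1/2)² + x²))`, which are summable, so its
Fourier series converges to it pointwise; pairing the frequencies `n` and `-n-1` gives
`sinh(xu) = (2x cosh(πx)/π) ∑ₙ (-1)ⁿ sin((n + 1/2) u) / ((n + 1/2)² + x²)` for `|u| < π`.
-/

open Real MeasureTheory

/-- The Jacobi theta function `θ₁(x, it)` for `x ∈ ℝ` and `t > 0`, defined by the
real series `θ₁(x, it) = 2 e^{−πt/4} Σ_{n=0}^∞ (−1)^n e^{−n(n+1)πt} sin((2n+1)πx)`. -/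
noncomputable def theta1 (x t : ℝ) : ℝ :=
  2 * Real.exp (-(π * t) / 4) *
    ∑' n : ℕ, (-1 : ℝ) ^ n * Real.exp (-((n : ℝ) * ((n : ℝ) + 1)) * π * t) *
      Real.sin ((2 * (n : ℝ) + 1) * π * x)

open Set

lemma Int.cast_add_half_ne_zero (n : ℤ) : (n : ℝ) + 1 / 2 ≠ 0 := by
  intro h
  have : ((2 * n + 1 : ℤ) : ℝ) = 0 := by push_cast; linarith
  have : 2 * n + 1 = 0 := by exact_mod_cast this
  omega

lemma summable_inv_int_add_half_sq_add_sq (x : ℝ) :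
    Summable fun n : ℤ => ((n + 1 / 2 : ℝ) ^ 2 + x ^ 2)⁻¹ := by
  refine ((Real.summable_one_div_int_add_rpow (1 / 2) 2).mpr one_lt_two).of_nonneg_of_le
    (fun n => by positivity) fun n => ?_
  rw [Real.rpow_two, sq_abs]
  exact (inv_anti₀ (pow_two_pos_of_ne_zero n.cast_add_half_ne_zero)
    (le_add_of_nonneg_right (sq_nonneg x))).trans_eq (one_div _).symm

lemma summable_inv_nat_add_half_sq_add_sq (x : ℝ) :
    Summable fun n : ℕ => ((n + 1 / 2 : ℝ) ^ 2 + x ^ 2)⁻¹ :=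
  ((summable_inv_int_add_half_sq_add_sq x).comp_injective Nat.cast_injective).congr
    fun n => by simp

section FourierSeries

open Complex

lemma exp_half_int_mul_pi_mul_I (n : ℤ) : cexp ((n + 1 / 2) * π * I) = (-1) ^ n * I := by
  rw [show ((n : ℂ) + 1 / 2) * π * I = n * (π * I) + π / 2 * I by ring, Complex.exp_add,
    exp_int_mul, exp_pi_mul_I, exp_pi_div_two_mul_I]

lemma exp_neg_half_int_mul_pi_mul_I (n : ℤ) :
    cexp (-((n + 1 / 2) * π * I)) = -((-1) ^ n * I) := by
  rw [Complex.exp_neg, exp_half_int_mul_pi_mul_I, mul_inv, ← inv_zpow, inv_neg, inv_one, inv_I]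
  ring

lemma hasDerivAt_exp_mul_sinh_primitive (x b : ℂ) (hd : x ^ 2 + b ^ 2 ≠ 0) (u : ℝ) :
    HasDerivAt (fun u : ℝ => cexp (-(b * u * I)) *
        (x * Complex.cosh (x * u) + b * I * Complex.sinh (x * u)) / (x ^ 2 + b ^ 2))
      (cexp (-(b * u * I)) * Complex.sinh (x * u)) u := by
  suffices ∀ w : ℂ, HasDerivAt (fun w => cexp (-(b * w * I)) *
      (x * Complex.cosh (x * w) + b * I * Complex.sinh (x * w)) / (x ^ 2 + b ^ 2))
      (cexp (-(b * w * I)) * Complex.sinh (x * w)) w from (this u).comp_ofReal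
  intro w
  have e := (((hasDerivAt_id w).const_mul b).mul_const I).neg.cexp
  have c := (Complex.hasDerivAt_cosh (x * w)).comp w ((hasDerivAt_id w).const_mul x)
  have s := (Complex.hasDerivAt_sinh (x * w)).comp w ((hasDerivAt_id w).const_mul x)
  refine ((e.mul ((c.const_mul x).add (s.const_mul (b * I)))).div_const
    (x ^ 2 + b ^ 2)).congr_deriv ?_
  rw [div_eq_iff hd]
  simp only [id, mul_one, Pi.neg_apply, Pi.add_apply, Function.comp_apply]
  linear_combination (-b ^ 2 * cexp (-(b * w * I)) * Complex.sinh (x * w)) * I_sq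

lemma integral_exp_mul_sinh_half_int (x : ℝ) (n : ℤ) :
    ∫ u in (-π)..π, cexp (-((n + 1 / 2) * u * I)) * Complex.sinh (x * u) =
      -2 * I * (-1) ^ n * x * Complex.cosh (x * π) / (x ^ 2 + (n + 1 / 2) ^ 2) := by
  have hd : (x : ℂ) ^ 2 + ((n : ℂ) + 1 / 2) ^ 2 ≠ 0 := by
    have : 0 < x ^ 2 + ((n : ℝ) + 1 / 2) ^ 2 :=
      add_pos_of_nonneg_of_pos (sq_nonneg x) (pow_two_pos_of_ne_zero n.cast_add_half_ne_zero)
    simpa using ofReal_ne_zero.mpr this.ne'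
  rw [intervalIntegral.integral_eq_sub_of_hasDerivAt
    (fun u _ => hasDerivAt_exp_mul_sinh_primitive x _ hd u)
    ((by fun_prop : Continuous _).intervalIntegrable _ _)]
  simp only [ofReal_neg, mul_neg, neg_mul, neg_neg, Complex.cosh_neg, Complex.sinh_neg,
    exp_neg_half_int_mul_pi_mul_I, exp_half_int_mul_pi_mul_I]
  field_simp
  ring

noncomputable def sinhCoeff (x t : ℝ) : ℝ := x * Real.cosh (π * x) / π / (t ^ 2 + x ^ 2)

lemma sinhCoeff_neg (x t : ℝ) : sinhCoeff x (-t) = sinhCoeff x t := by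
  rw [sinhCoeff, sinhCoeff, neg_sq]

/-- The twist by `e^{-iu/2}` makes the values at `±π` agree, so that `twistedSinh x` descends to
a continuous function on the circle `ℝ / 2πℤ`. -/
noncomputable def twistedSinh (x u : ℝ) : ℂ := cexp (-(u / 2 * I)) * Complex.sinh (x * u)

lemma twistedSinh_neg_pi (x : ℝ) : twistedSinh x (-π) = twistedSinh x (-π + 2 * π) := by
  have exp_neg_pi : cexp (-((-π : ℝ) / 2 * I)) = I := by
    simp [neg_div, exp_pi_div_two_mul_I]
  have exp_pi : cexp (-((-π + 2 * π : ℝ) / 2 * I)) = -I := by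
    rw [show -π + 2 * π = π by ring, Complex.exp_neg, exp_pi_div_two_mul_I, inv_I]
  rw [twistedSinh, twistedSinh, exp_neg_pi, exp_pi, show -π + 2 * π = π by ring, ofReal_neg,
    mul_neg, Complex.sinh_neg]
  ring

local instance : Fact (0 < 2 * π) := ⟨two_pi_pos⟩

noncomputable def twistedSinhCircle (x : ℝ) : C(AddCircle (2 * π), ℂ) where
  toFun := AddCircle.liftIco (2 * π) (-π) (twistedSinh x)
  continuous_toFun := AddCircle.liftIco_continuous (twistedSinh_neg_pi x)
    (by unfold twistedSinh; fun_prop)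

lemma twistedSinhCircle_coe {x u : ℝ} (hu : u ∈ Ico (-π) π) :
    twistedSinhCircle x u = twistedSinh x u :=
  show AddCircle.liftIco (2 * π) (-π) (twistedSinh x) u = _ from
    AddCircle.liftIco_coe_apply (by rwa [show -π + 2 * π = π by ring])

lemma fourier_coe_two_pi (n : ℤ) (u : ℝ) :
    fourier n (u : AddCircle (2 * π)) = cexp (n * u * I) := by
  rw [fourier_coe_apply]
  congr 1
  field_simp
  push_cast
  ring

lemma fourierCoeff_twistedSinhCircle (x : ℝ) (n : ℤ) :
    fourierCoeff (twistedSinhCircle x) n = (-1) ^ n * -I * sinhCoeff x (n + 1 / 2) := by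
  rw [twistedSinhCircle, ContinuousMap.coe_mk, fourierCoeff_liftIco_eq,
    fourierCoeffOn_eq_integral]
  have period : -π + 2 * π - -π = 2 * π := by ring
  have integrand (u : ℝ) : fourier (-n) (u : AddCircle (-π + 2 * π - -π)) • twistedSinh x u =
      cexp (-((n + 1 / 2) * u * I)) * Complex.sinh (x * u) := by
    rw [fourier_coe_apply, period, smul_eq_mul, twistedSinh, ← mul_assoc, ← Complex.exp_add]
    congr 2
    field_simp
    push_cast
    ring
  simp only [integrand]
  rw [show -π + 2 * π = π by ring, integral_exp_mul_sinh_half_int, sinhCoeff, mul_comm π x,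
    real_smul]
  push_cast
  field_simp
  ring

lemma summable_fourierCoeff_twistedSinhCircle (x : ℝ) :
    Summable (fourierCoeff (twistedSinhCircle x)) := by
  refine Summable.of_norm_bounded
    ((summable_inv_int_add_half_sq_add_sq x).mul_left |x * Real.cosh (π * x) / π|) fun n => ?_
  rw [fourierCoeff_twistedSinhCircle, norm_mul, norm_mul, norm_zpow, norm_neg, norm_one,
    one_zpow, norm_neg, norm_I, norm_real, sinhCoeff, norm_div, norm_eq_abs,
    norm_of_nonneg (by positivity), one_mul, one_mul, div_eq_mul_inv]

lemma hasSum_sinhCoeff_mul_cexp (x : ℝ) {u : ℝ} (hu : u ∈ Ico (-π) π) :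
    HasSum (fun n : ℤ => (-1) ^ n * -I * sinhCoeff x (n + 1 / 2) * cexp ((n + 1 / 2) * u * I))
      (Real.sinh (x * u)) := by
  have h := (has_pointwise_sum_fourier_series_of_summable
    (summable_fourierCoeff_twistedSinhCircle x) u).mul_left (cexp (u / 2 * I))
  rw [twistedSinhCircle_coe hu, twistedSinh, ← mul_assoc, ← Complex.exp_add, add_neg_cancel,
    Complex.exp_zero, one_mul] at h
  rw [ofReal_sinh, ofReal_mul]
  refine h.congr_fun fun n => ?_
  rw [fourierCoeff_twistedSinhCircle, fourier_coe_two_pi, smul_eq_mul,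
    show ((n : ℂ) + 1 / 2) * u * I = u / 2 * I + n * u * I by ring, Complex.exp_add]
  ring

lemma hasSum_sinhCoeff_mul_sin (x : ℝ) {u : ℝ} (hu : u ∈ Ico (-π) π) :
    HasSum (fun k : ℕ => 2 * (-1) ^ k * sinhCoeff x (k + 1 / 2) * Real.sin ((k + 1 / 2) * u))
      (Real.sinh (x * u)) := by
  rw [← Complex.hasSum_ofReal]
  refine (hasSum_sinhCoeff_mul_cexp x hu).nat_add_neg_add_one.congr_fun fun k => ?_
  have half : ((-((k : ℤ) + 1) : ℤ) : ℝ) + 1 / 2 = -(k + 1 / 2) := by push_cast; ring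
  have sign : (-1 : ℂ) ^ (-((k : ℤ) + 1)) = -(-1) ^ k := by
    rw [zpow_neg, zpow_add_one₀ (by norm_num), zpow_natCast, mul_inv, ← inv_pow, inv_neg,
      inv_one]
    ring
  rw [half, sinhCoeff_neg, sign]
  push_cast
  rw [Complex.sin, zpow_natCast,
    show (-(k + 1) + 1 / 2 : ℂ) * u * I = -((k + 1 / 2) * u) * I by ring]
  ring

theorem hasSum_neg_one_pow_mul_sin_div (x : ℝ) (hx : x ≠ 0) {u : ℝ} (hu : u ∈ Ico (-π) π) :
    HasSum (fun k : ℕ => (-1) ^ k * Real.sin ((k + 1 / 2) * u) / ((k + 1 / 2) ^ 2 + x ^ 2))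
      (π * Real.sinh (x * u) / (2 * x * Real.cosh (π * x))) := by
  rw [mul_div_right_comm]
  refine ((hasSum_sinhCoeff_mul_sin x hu).mul_left
    (π / (2 * x * Real.cosh (π * x)))).congr_fun fun k => ?_
  rw [sinhCoeff]
  field_simp

end FourierSeries

theorem integral_Ioi_tsum_mul_exp_neg {b c : ℕ → ℝ} (hc : ∀ n, 0 < c n)
    (hbc : Summable fun n => |b n| / c n) :
    ∫ τ in Ioi 0, ∑' n, b n * exp (-c n * τ) = ∑' n, b n / c n := by
  have integral_exp (n : ℕ) : ∫ τ in Ioi 0, exp (-c n * τ) = 1 / c n := by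
    rw [integral_exp_mul_Ioi (neg_lt_zero.mpr (hc n))]
    simp [neg_div]
  have integrable (n : ℕ) : IntegrableOn (fun τ => b n * exp (-c n * τ)) (Ioi 0) :=
    (integrableOn_exp_mul_Ioi (neg_lt_zero.mpr (hc n)) 0).const_mul (b n)
  have integral_norm (n : ℕ) : ∫ τ in Ioi 0, ‖b n * exp (-c n * τ)‖ = |b n| / c n := by
    simp_rw [norm_mul, norm_eq_abs, abs_exp, integral_const_mul, integral_exp, mul_one_div]
  rw [← integral_tsum_of_summable_integral_norm integrable (by simpa only [integral_norm])]
  simp_rw [integral_const_mul, integral_exp, mul_one_div]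

lemma theta1_eq_tsum (y t : ℝ) :
    theta1 y t = ∑' n : ℕ, 2 * (-1) ^ n * sin ((n + 1 / 2) * (2 * π * y)) *
      exp (-(π * (n + 1 / 2) ^ 2) * t) := by
  rw [theta1, ← tsum_mul_left]
  refine tsum_congr fun n => ?_
  rw [show -(π * (n + 1 / 2) ^ 2) * t = -(π * t) / 4 + -((n : ℝ) * (n + 1)) * π * t by ring,
    exp_add]
  ring_nf

theorem integral_theta1_mul_exp_neg {s x : ℝ} (hs : 0 < s) (hx : x ≠ 0) {y : ℝ}
    (hy : 2 * π * y ∈ Ico (-π) π) :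
    ∫ τ in Ioi 0, theta1 y (s * τ) * exp (-(π * x ^ 2 * (s * τ))) =
      Real.sinh (x * (2 * π * y)) / (s * x * Real.cosh (π * x)) := by
  set u := 2 * π * y with hu_def
  set c : ℕ → ℝ := fun n => π * s * ((n + 1 / 2) ^ 2 + x ^ 2) with hc_def
  have hc (n : ℕ) : 0 < c n := by positivity
  have integrand (τ : ℝ) : theta1 y (s * τ) * exp (-(π * x ^ 2 * (s * τ))) =
      ∑' n : ℕ, 2 * (-1) ^ n * sin ((n + 1 / 2) * u) * exp (-c n * τ) := by
    rw [theta1_eq_tsum, ← tsum_mul_right]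
    refine tsum_congr fun n => ?_
    rw [mul_assoc, ← exp_add, hc_def, hu_def]
    ring_nf
  have summable : Summable fun n : ℕ => |2 * (-1) ^ n * sin ((n + 1 / 2) * u)| / c n := by
    refine ((summable_inv_nat_add_half_sq_add_sq x).mul_left (2 / (π * s))).of_nonneg_of_le
      (fun n => div_nonneg (abs_nonneg _) (hc n).le) fun n => ?_
    calc |2 * (-1) ^ n * sin ((n + 1 / 2) * u)| / c n ≤ 2 / c n := by
          gcongr
          rw [abs_mul, abs_mul, abs_pow, abs_neg, abs_one, one_pow, mul_one, abs_two]
          linarith [abs_sin_le_one ((n + 1 / 2) * u)]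
      _ = 2 / (π * s) * (((n : ℝ) + 1 / 2) ^ 2 + x ^ 2)⁻¹ := by
          rw [hc_def]
          field_simp
  have terms (n : ℕ) : 2 * (-1) ^ n * sin ((n + 1 / 2) * u) / c n =
      2 / (π * s) * ((-1) ^ n * sin ((n + 1 / 2) * u) / ((n + 1 / 2) ^ 2 + x ^ 2)) := by
    rw [hc_def]
    field_simp
  simp only [integrand]
  rw [integral_Ioi_tsum_mul_exp_neg hc summable, tsum_congr terms, tsum_mul_left,
    (hasSum_neg_one_pow_mul_sin_div x hx hy).tsum_eq]
  field_simp

/-- For every `γ ∈ (0,2)` and every `x ≠ 0`,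
`∫₀^∞ θ₁(γ²/8, (γ²/4)iτ) e^{−πγ²x²τ/4} dτ = 4 sinh(γ²πx/4) / (γ² x cosh(πx))`. -/
theorem laplace_theta1_gamma (γ x : ℝ) (hγ : γ ∈ Set.Ioo (0 : ℝ) 2) (hx : x ≠ 0) :
    ∫ τ in Set.Ioi (0 : ℝ), theta1 (γ ^ 2 / 8) (γ ^ 2 / 4 * τ) *
        Real.exp (-(π * γ ^ 2 * x ^ 2 * τ) / 4) =
      4 * Real.sinh (γ ^ 2 * π * x / 4) / (γ ^ 2 * x * Real.cosh (π * x)) := by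
  obtain ⟨hγ0, hγ2⟩ := hγ
  have hγ_sq : γ ^ 2 < 4 := by nlinarith
  have hy : 2 * π * (γ ^ 2 / 8) ∈ Ico (-π) π := ⟨by nlinarith [pi_pos], by nlinarith [pi_pos]⟩
  have exponent (τ : ℝ) : -(π * γ ^ 2 * x ^ 2 * τ) / 4 = -(π * x ^ 2 * (γ ^ 2 / 4 * τ)) := by
    ring
  simp only [exponent]
  rw [integral_theta1_mul_exp_neg (div_pos (pow_pos hγ0 2) four_pos) hx hy]
  field_simp
  ring_nf
end

section
/- For every real number x, one has ∬_{(0,∞)²} a e^{−a} b^{ix} / (√(ab)(a + b)) da db = π Γ(1 + ix) / cosh(πx), where Γ denotes the complex Gamma function and b^{ix} := e^{i x log b}. -/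
/-!
Write the integrand as `φ(a) k(b/a) / a` with `φ(a) = e^{-a} a^{ix}` and
`k(t) = t^{s-1} / (1 + t)`, `s = 1/2 + ix`. The substitution `b = a t` in the inner integral
separates the variables, so the double integral is `(∫ φ) (∫ k) = Γ(1 + ix) · M(s)`, where `M` is
the Mellin transform of `1 / (1 + t)`. The substitution `t = u / (1 - u)` turns `M(s)` into the
Beta integral `B(s, 1 - s) = Γ(s) Γ(1 - s) = π / sin(πs)`, and `sin(π/2 + iπx) = cosh(πx)`.
-/

open Real MeasureTheory Complex Set

section MellinInvOneAdd

lemma image_div_one_sub_Ioo : (fun u : ℝ => u / (1 - u)) '' Ioo 0 1 = Ioi 0 := by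
  ext t
  refine ⟨?_, fun (ht : 0 < t) => ⟨t / (1 + t), ?_, ?_⟩⟩
  · rintro ⟨u, ⟨hu0, hu1⟩, rfl⟩
    exact div_pos hu0 (sub_pos.2 hu1)
  · exact ⟨by positivity, (div_lt_one (by positivity)).2 (by linarith)⟩
  · field_simp
    ring

lemma injOn_div_one_sub_Ioo : InjOn (fun u : ℝ => u / (1 - u)) (Ioo 0 1) := by
  rintro u ⟨-, hu1⟩ v ⟨-, hv1⟩ h
  have hu : 1 - u ≠ 0 := by linarith
  have hv : 1 - v ≠ 0 := by linarith
  field_simp at h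
  linarith

lemma hasDerivAt_div_one_sub {u : ℝ} (hu : u ≠ 1) :
    HasDerivAt (fun u : ℝ => u / (1 - u)) ((1 - u) ^ 2)⁻¹ u := by
  have hu : 1 - u ≠ 0 := sub_ne_zero.2 hu.symm
  refine ((hasDerivAt_id' u).fun_div ((hasDerivAt_id' u).const_sub 1) hu).congr_deriv ?_
  field_simp
  ring

lemma mellin_integrand_inv_one_add_comp_div_one_sub (s : ℂ) {u : ℝ} (hu : u ∈ Ioo (0 : ℝ) 1) :
    |((1 - u) ^ 2)⁻¹| • (((u / (1 - u) : ℝ) : ℂ) ^ (s - 1) • (1 + ((u / (1 - u) : ℝ) : ℂ))⁻¹) =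
      (u : ℂ) ^ (s - 1) * (1 - (u : ℂ)) ^ ((1 - s) - 1) := by
  obtain ⟨hu0, hu1⟩ := hu
  have hv : 0 < 1 - u := sub_pos.2 hu1
  have hv' : (1 - u : ℂ) ≠ 0 := by exact_mod_cast hv.ne'
  rw [abs_of_pos (by positivity), ofReal_div, div_cpow_ofReal_nonneg hu0.le hv.le, real_smul,
    smul_eq_mul, show (1 : ℂ) - s - 1 = -s by ring, cpow_neg]
  push_cast
  rw [cpow_sub _ _ hv', cpow_one]
  field_simp
  ring

variable {s : ℂ}

lemma integrableOn_Ioo_betaIntegral_integrand (hs0 : 0 < s.re) (hs1 : s.re < 1) :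
    IntegrableOn (fun u : ℝ => (u : ℂ) ^ (s - 1) * (1 - (u : ℂ)) ^ ((1 - s) - 1)) (Ioo 0 1) := by
  rw [← intervalIntegrable_iff_integrableOn_Ioo_of_le zero_le_one]
  exact betaIntegral_convergent hs0 (by simpa using hs1)

theorem mellinConvergent_inv_one_add (hs0 : 0 < s.re) (hs1 : s.re < 1) :
    MellinConvergent (fun t : ℝ => (1 + (t : ℂ))⁻¹) s := by
  rw [MellinConvergent, ← image_div_one_sub_Ioo,
    integrableOn_image_iff_integrableOn_abs_deriv_smul measurableSet_Ioo
      (fun u hu => (hasDerivAt_div_one_sub hu.2.ne).hasDerivWithinAt) injOn_div_one_sub_Ioo]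
  exact (integrableOn_Ioo_betaIntegral_integrand hs0 hs1).congr_fun
    (fun u hu => (mellin_integrand_inv_one_add_comp_div_one_sub s hu).symm) measurableSet_Ioo

theorem mellin_inv_one_add (hs0 : 0 < s.re) (hs1 : s.re < 1) :
    mellin (fun t : ℝ => (1 + (t : ℂ))⁻¹) s = π / sin (π * s) := by
  rw [mellin, ← image_div_one_sub_Ioo,
    integral_image_eq_integral_abs_deriv_smul measurableSet_Ioo
      (fun u hu => (hasDerivAt_div_one_sub hu.2.ne).hasDerivWithinAt) injOn_div_one_sub_Ioo,
    setIntegral_congr_fun measurableSet_Ioo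
      (fun u hu => mellin_integrand_inv_one_add_comp_div_one_sub s hu),
    ← integral_Ioc_eq_integral_Ioo, ← intervalIntegral.integral_of_le zero_le_one,
    ← betaIntegral, betaIntegral_eq_Gamma_mul_div _ _ hs0 (by simpa using hs1), add_sub_cancel,
    Complex.Gamma_one, div_one, Complex.Gamma_mul_Gamma_one_sub]

end MellinInvOneAdd

section MultiplicativeConvolution

variable {E : Type*} [NormedAddCommGroup E] {a : ℝ}

lemma integrableOn_Ioi_comp_div_iff (g : ℝ → E) (ha : 0 < a) :
    IntegrableOn (fun b => g (b / a)) (Ioi 0) ↔ IntegrableOn g (Ioi 0) := by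
  simpa [div_eq_inv_mul] using integrableOn_Ioi_comp_mul_left_iff g 0 (inv_pos.2 ha)

lemma integral_Ioi_comp_div [NormedSpace ℝ E] (g : ℝ → E) (ha : 0 < a) :
    ∫ b in Ioi 0, g (b / a) = a • ∫ t in Ioi 0, g t := by
  simpa [div_eq_inv_mul] using integral_comp_mul_left_Ioi g 0 (inv_pos.2 ha)

lemma integral_Ioi_mul_comp_div (φ k : ℝ → ℂ) (ha : 0 < a) :
    ∫ b in Ioi 0, φ a * k (b / a) / a = φ a * ∫ t in Ioi 0, k t := by
  rw [integral_div, integral_const_mul, integral_Ioi_comp_div k ha, real_smul]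
  field_simp [ofReal_ne_zero.2 ha.ne']

lemma integral_Ioi_norm_mul_comp_div (φ k : ℝ → ℂ) (ha : 0 < a) :
    ∫ b in Ioi 0, ‖φ a * k (b / a) / a‖ = ‖φ a‖ * ∫ t in Ioi 0, ‖k t‖ := by
  simp_rw [norm_div, norm_mul, norm_real, norm_of_nonneg ha.le]
  rw [integral_div, integral_const_mul, integral_Ioi_comp_div (‖k ·‖) ha, smul_eq_mul]
  field_simp

variable {φ k : ℝ → ℂ}

lemma integrableOn_Ioi_prod_mul_comp_div (hφm : Measurable φ) (hkm : Measurable k)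
    (hφ : IntegrableOn φ (Ioi 0)) (hk : IntegrableOn k (Ioi 0)) :
    IntegrableOn (fun p : ℝ × ℝ => φ p.1 * k (p.2 / p.1) / p.1) (Ioi 0 ×ˢ Ioi 0) := by
  rw [IntegrableOn, Measure.volume_eq_prod, ← Measure.prod_restrict,
    integrable_prod_iff (Measurable.aestronglyMeasurable (by fun_prop))]
  refine ⟨?_, ?_⟩
  · filter_upwards [self_mem_ae_restrict measurableSet_Ioi] with a (ha : 0 < a)
    exact (((integrableOn_Ioi_comp_div_iff k ha).2 hk).const_mul (φ a)).div_const (a : ℂ)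
  · refine (hφ.norm.mul_const (∫ t in Ioi 0, ‖k t‖)).congr ?_
    filter_upwards [self_mem_ae_restrict measurableSet_Ioi] with a (ha : 0 < a)
    exact (integral_Ioi_norm_mul_comp_div φ k ha).symm

theorem setIntegral_Ioi_prod_mul_comp_div (hφm : Measurable φ) (hkm : Measurable k)
    (hφ : IntegrableOn φ (Ioi 0)) (hk : IntegrableOn k (Ioi 0)) :
    ∫ p in Ioi 0 ×ˢ Ioi 0, φ p.1 * k (p.2 / p.1) / p.1 =
      (∫ a in Ioi 0, φ a) * ∫ t in Ioi 0, k t := by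
  rw [Measure.volume_eq_prod, setIntegral_prod _ (integrableOn_Ioi_prod_mul_comp_div hφm hkm hφ hk),
    setIntegral_congr_fun measurableSet_Ioi fun a ha => integral_Ioi_mul_comp_div φ k ha,
    integral_mul_const]

end MultiplicativeConvolution

lemma ofReal_cpow_sub_half {r : ℝ} (hr : 0 < r) (w : ℂ) :
    (r : ℂ) ^ (w - 1 / 2) = (r : ℂ) ^ w / (√r : ℂ) := by
  rw [sub_eq_add_neg, cpow_add _ _ (ofReal_ne_zero.2 hr.ne'), cpow_neg, sqrt_eq_rpow,
    ofReal_cpow hr.le]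
  norm_num [div_eq_mul_inv]

lemma cexp_mul_log_eq_cpow (w : ℂ) {r : ℝ} (hr : 0 < r) :
    cexp (w * Real.log r) = (r : ℂ) ^ w := by
  rw [cpow_def_of_ne_zero (ofReal_ne_zero.2 hr.ne'), ofReal_log hr.le, mul_comm]

lemma double_integral_gamma_integrand_eq (x : ℝ) {a b : ℝ} (ha : 0 < a) (hb : 0 < b) :
    ((a * Real.exp (-a) / (√(a * b) * (a + b)) : ℝ) : ℂ) * cexp (I * x * Real.log b) =
      Real.exp (-a) * (a : ℂ) ^ ((1 + I * x) - 1) *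
        (((b / a : ℝ) : ℂ) ^ ((1 / 2 + I * x) - 1) • (1 + ((b / a : ℝ) : ℂ))⁻¹) / a := by
  rw [cexp_mul_log_eq_cpow _ hb, add_sub_cancel_left,
    show 1 / 2 + I * x - 1 = I * x - 1 / 2 by ring, ofReal_cpow_sub_half (div_pos hb ha),
    ofReal_div b a, div_cpow_ofReal_nonneg hb.le ha.le, sqrt_div' _ ha.le, sqrt_mul ha.le,
    smul_eq_mul]
  have ha' : (a : ℂ) ≠ 0 := ofReal_ne_zero.2 ha.ne'
  have hsa : (√a : ℂ) ≠ 0 := ofReal_ne_zero.2 (sqrt_pos.2 ha).ne'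
  have hsb : (√b : ℂ) ≠ 0 := ofReal_ne_zero.2 (sqrt_pos.2 hb).ne'
  have hab : (a + b : ℂ) ≠ 0 := by exact_mod_cast (add_pos ha hb).ne'
  have hpa : (a : ℂ) ^ (I * x) ≠ 0 := cpow_ne_zero_iff.2 (Or.inl ha')
  have hsqa : (√a : ℂ) ^ 2 = a := by exact_mod_cast sq_sqrt ha.le
  push_cast
  field_simp
  rw [hsqa]

/-- For every real `x`,
`∬_{(0,∞)²} a e^{−a} b^{ix} / (√(ab)(a + b)) da db = π Γ(1 + ix) / cosh(πx)`,
where `Γ` is the complex Gamma function and `b^{ix} := e^{i x log b}`. -/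
theorem double_integral_gamma (x : ℝ) :
    ∫ p in (Set.Ioi (0 : ℝ)) ×ˢ (Set.Ioi (0 : ℝ)),
        ((p.1 * Real.exp (-p.1) / (Real.sqrt (p.1 * p.2) * (p.1 + p.2)) : ℝ) : ℂ) *
          Complex.exp (Complex.I * x * Real.log p.2) =
      (π : ℂ) * Complex.Gamma (1 + Complex.I * x) / (Real.cosh (π * x) : ℂ) := by
  have hs0 : 0 < (1 / 2 + I * x : ℂ).re := by simp
  have hs1 : (1 / 2 + I * x : ℂ).re < 1 := by norm_num
  have hsin : sin (π * (1 / 2 + I * x)) = Real.cosh (π * x) := by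
    rw [show (π : ℂ) * (1 / 2 + I * x) = (π * x : ℝ) * I + π / 2 by push_cast; ring,
      Complex.sin_add_pi_div_two, cos_mul_I, ofReal_cosh]
  rw [setIntegral_congr_fun (measurableSet_Ioi.prod measurableSet_Ioi)
      fun p hp => double_integral_gamma_integrand_eq x hp.1 hp.2,
    setIntegral_Ioi_prod_mul_comp_div (by fun_prop) (by fun_prop)
      (GammaIntegral_convergent (by simp)) (mellinConvergent_inv_one_add hs0 hs1),
    ← GammaIntegral, ← Complex.Gamma_eq_integral (by simp), ← mellin,
    mellin_inv_one_add hs0 hs1, hsin]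
  ring
end

section
/- For all real numbers u > 0, β ∈ (0, 1], and θ ∈ ℝ, one has Σ_{p∈ℤ} sin(pθ) e^{−|p − β| u} = sin θ · sinh(βu) / (cosh u − cos θ). -/
/-!
For `p ≥ 1` we have `|p - β| = p - β` and for `p ≤ -1` we have `|p - β| = -p + β`, while the
term `p = 0` vanishes. So with `S = Σ_{n ≥ 1} sin(nθ) e^{-nu}` the sum is
`e^{βu} S - e^{-βu} S = 2 sinh(βu) S`. The series `S` is the imaginary part of the geometric
series of `z = e^{-u + iθ}`, which gives `S = sin θ / (2 (cosh u - cos θ))`.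
-/

open Real

theorem hasSum_sin_mul_pow (θ : ℝ) {r : ℝ} (hr : |r| < 1) :
    HasSum (fun n : ℕ => sin (n * θ) * r ^ n) (r * sin θ / (1 - 2 * r * cos θ + r ^ 2)) := by
  set z : ℂ := r * Complex.exp (θ * Complex.I)
  have hz : ‖z‖ < 1 := by simpa [z, Complex.norm_exp_ofReal_mul_I] using hr
  have hzpow (n : ℕ) : (z ^ n).im = sin (n * θ) * r ^ n := by
    rw [mul_pow, ← Complex.exp_nat_mul, ← mul_assoc, ← Complex.ofReal_pow,
      ← Complex.ofReal_natCast, ← Complex.ofReal_mul, Complex.im_ofReal_mul,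
      Complex.exp_ofReal_mul_I_im, mul_comm]
  have hre : (1 - z).re = 1 - r * cos θ := by simp [z, Complex.exp_ofReal_mul_I_re]
  have him : (1 - z).im = -(r * sin θ) := by simp [z, Complex.exp_ofReal_mul_I_im]
  have hnormSq : Complex.normSq (1 - z) = 1 - 2 * r * cos θ + r ^ 2 := by
    rw [Complex.normSq_apply, hre, him]
    linear_combination r ^ 2 * sin_sq_add_cos_sq θ
  have h := (hasSum_geometric_of_norm_lt_one hz).mapL Complex.imCLM
  simp only [Complex.imCLM_apply, hzpow, Complex.inv_im, him, hnormSq, neg_neg] at h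
  exact h

theorem hasSum_sin_succ_mul_pow (θ : ℝ) {r : ℝ} (hr : |r| < 1) :
    HasSum (fun n : ℕ => sin ((n + 1) * θ) * r ^ (n + 1))
      (r * sin θ / (1 - 2 * r * cos θ + r ^ 2)) := by
  simpa using (hasSum_nat_add_iff' 1).mpr (hasSum_sin_mul_pow θ hr)

theorem exp_neg_mul_sin_div_eq_sin_div_cosh_sub_cos (u θ : ℝ) :
    exp (-u) * sin θ / (1 - 2 * exp (-u) * cos θ + exp (-u) ^ 2) =
      sin θ / (cosh u - cos θ) / 2 := by
  have hden : 1 - 2 * exp (-u) * cos θ + exp (-u) ^ 2 = exp (-u) * (2 * (cosh u - cos θ)) := by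
    rw [cosh_eq, exp_neg]
    field_simp
    ring
  rw [hden, mul_div_mul_left _ _ (exp_pos _).ne', div_div, mul_comm 2]

theorem exp_neg_abs_natCast_succ_sub_mul {β : ℝ} (hβ : β ≤ 1) (n : ℕ) (u : ℝ) :
    exp (-|(n + 1 : ℝ) - β| * u) = exp (β * u) * exp (-u) ^ (n + 1) := by
  rw [abs_of_nonneg (by linarith [n.cast_nonneg (α := ℝ)]), ← exp_nat_mul, ← exp_add]
  push_cast
  ring_nf

theorem exp_neg_abs_neg_natCast_succ_sub_mul {β : ℝ} (hβ : -1 ≤ β) (n : ℕ) (u : ℝ) :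
    exp (-|-(n + 1 : ℝ) - β| * u) = exp (-(β * u)) * exp (-u) ^ (n + 1) := by
  rw [abs_of_nonpos (by linarith [n.cast_nonneg (α := ℝ)]), ← exp_nat_mul, ← exp_add]
  push_cast
  ring_nf

/-- For `u > 0`, `β ∈ (0, 1]` and `θ ∈ ℝ`:
`Σ_{p∈ℤ} sin(pθ) e^{−|p − β| u} = sin θ sinh(βu) / (cosh u − cos θ)`. -/
theorem tsum_int_sin_exp_abs (u β θ : ℝ) (hu : 0 < u) (hβ : β ∈ Set.Ioc (0 : ℝ) 1) :
    ∑' p : ℤ, Real.sin ((p : ℝ) * θ) * Real.exp (-|((p : ℝ) - β)| * u) =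
      Real.sin θ * Real.sinh (β * u) / (Real.cosh u - Real.cos θ) := by
  obtain ⟨hβ0, hβ1⟩ := hβ
  have hr : |exp (-u)| < 1 := by
    rw [abs_of_pos (exp_pos _), exp_lt_one_iff]
    linarith
  have hS := hasSum_sin_succ_mul_pow θ hr
  rw [exp_neg_mul_sin_div_eq_sin_div_cosh_sub_cos] at hS
  have hpos := hS.mul_left (exp (β * u))
  have hneg := hS.mul_left (-exp (-(β * u)))
  have hsum := HasSum.of_add_one_of_neg_add_one
    (f := fun p : ℤ => sin (p * θ) * exp (-|(p : ℝ) - β| * u))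
    (hpos.congr_fun fun n => ?_) (hneg.congr_fun fun n => ?_)
  · rw [hsum.tsum_eq, sinh_eq]
    simp only [Int.cast_zero, zero_mul, sin_zero]
    ring
  · push_cast
    rw [exp_neg_abs_natCast_succ_sub_mul hβ1]
    ring
  · push_cast
    rw [exp_neg_abs_neg_natCast_succ_sub_mul (by linarith), neg_mul (_ + _), sin_neg]
    ring
end

section
/- For every real number u > 0, one has Σ_{k∈ℤ} k (−1)^{k−1} e^{−u|k − 1/3|} = sinh(u/3) / (2 cosh²(u/2)). -/
/-!
For `-1 ≤ a ≤ 1` the sign of `k - a` is fixed on `k ≥ 1` and on `k ≤ -1` (the term `k = 0` vanishes), so with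
`q = e^{-u}` the two halves of the sum are `-e^{ua} ∑ n (-q)^n` and `e^{-ua} ∑ n (-q)^n`. Their sum is
`2 sinh(ua) · q / (1 + q)²`, and `q / (1 + q)² = 1 / (4 cosh²(u/2))`.
-/

open Real

noncomputable def alternatingExpTerm (u a : ℝ) (k : ℤ) : ℝ :=
  (k : ℝ) * (-1 : ℝ) ^ (k - 1) * exp (-u * |(k : ℝ) - a|)

theorem exp_neg_div_one_add_exp_neg_sq (u : ℝ) :
    exp (-u) / (1 + exp (-u)) ^ 2 = 1 / (4 * cosh (u / 2) ^ 2) := by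
  have h : 1 + exp (-u) = 2 * cosh (u / 2) * exp (-(u / 2)) := by
    have h₁ : exp (u / 2) * exp (-(u / 2)) = 1 := by rw [← exp_add]; simp
    have h₂ : exp (-(u / 2)) * exp (-(u / 2)) = exp (-u) := by rw [← exp_add]; ring_nf
    rw [cosh_eq]
    linear_combination -h₁ - h₂
  have hc : cosh (u / 2) ≠ 0 := (cosh_pos _).ne'
  rw [h, mul_pow, ← exp_nat_mul]
  field_simp
  ring_nf

theorem hasSum_natCast_mul_neg_exp_neg_pow {u : ℝ} (hu : 0 < u) :
    HasSum (fun n : ℕ => (n : ℝ) * (-exp (-u)) ^ n) (-(1 / (4 * cosh (u / 2) ^ 2))) := by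
  have hq : ‖-exp (-u)‖ < 1 := by
    rw [norm_neg, norm_of_nonneg (exp_nonneg _), exp_lt_one_iff]
    linarith
  have := hasSum_coe_mul_geometric_of_norm_lt_one hq
  rwa [sub_neg_eq_add, neg_div, exp_neg_div_one_add_exp_neg_sq] at this

theorem alternatingExpTerm_natCast {a : ℝ} (ha : a ≤ 1) (u : ℝ) (n : ℕ) :
    alternatingExpTerm u a n = -exp (u * a) * (n * (-exp (-u)) ^ n) := by
  rcases n.eq_zero_or_pos with rfl | hn
  · simp [alternatingExpTerm]
  have hna : 0 ≤ (n : ℝ) - a := by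
    have : (1 : ℝ) ≤ n := by exact_mod_cast hn
    linarith
  rw [alternatingExpTerm, Int.cast_natCast, abs_of_nonneg hna, zpow_sub_one₀ (by norm_num),
    zpow_natCast, inv_neg_one, neg_pow (exp (-u)), ← exp_nat_mul,
    show -u * (n - a) = u * a + n * -u by ring, exp_add]
  ring

theorem alternatingExpTerm_neg_natCast_add_one {a : ℝ} (ha : -1 ≤ a) (u : ℝ) (n : ℕ) :
    alternatingExpTerm u a (-(n + 1)) =
      exp (-(u * a)) * (((n + 1 : ℕ) : ℝ) * (-exp (-u)) ^ (n + 1)) := by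
  have hna : -((n : ℝ) + 1) - a ≤ 0 := by linarith [(n.cast_nonneg : (0 : ℝ) ≤ n)]
  rw [alternatingExpTerm, show -(n + 1 : ℤ) - 1 = -((n + 2 : ℕ) : ℤ) by push_cast; ring,
    zpow_neg, zpow_natCast, ← inv_pow, inv_neg_one]
  push_cast
  rw [abs_of_nonpos hna, neg_pow (exp (-u)), ← exp_nat_mul,
    show -u * -(-((n : ℝ) + 1) - a) = -(u * a) + ((n + 1 : ℕ) : ℝ) * -u by push_cast; ring,
    exp_add]
  push_cast
  ring

theorem hasSum_alternatingExpTerm {a : ℝ} (ha : a ∈ Set.Icc (-1) 1) {u : ℝ} (hu : 0 < u) :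
    HasSum (alternatingExpTerm u a) (sinh (u * a) / (2 * cosh (u / 2) ^ 2)) := by
  have hS := hasSum_natCast_mul_neg_exp_neg_pow hu
  have hS₁ : HasSum (fun n : ℕ => ((n + 1 : ℕ) : ℝ) * (-exp (-u)) ^ (n + 1))
      (-(1 / (4 * cosh (u / 2) ^ 2))) := by
    simpa using (hasSum_nat_add_iff' 1).mpr hS
  have hpos := hS.mul_left (-exp (u * a))
  have hneg := hS₁.mul_left (exp (-(u * a)))
  simp only [← alternatingExpTerm_natCast ha.2 u] at hpos
  simp only [← alternatingExpTerm_neg_natCast_add_one ha.1 u] at hneg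
  have hval : -exp (u * a) * -(1 / (4 * cosh (u / 2) ^ 2)) +
      exp (-(u * a)) * -(1 / (4 * cosh (u / 2) ^ 2)) = sinh (u * a) / (2 * cosh (u / 2) ^ 2) := by
    rw [sinh_eq]
    field_simp
    ring
  exact hval ▸ hpos.of_nat_of_neg_add_one hneg

/-- For every `u > 0`:
`Σ_{k∈ℤ} k (−1)^{k−1} e^{−u|k − 1/3|} = sinh(u/3) / (2 cosh²(u/2))`. -/
theorem tsum_int_alternating_exp_abs (u : ℝ) (hu : 0 < u) :
    ∑' k : ℤ, (k : ℝ) * (-1 : ℝ) ^ (k - 1) * Real.exp (-u * |(k : ℝ) - 1 / 3|) =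
      Real.sinh (u / 3) / (2 * Real.cosh (u / 2) ^ 2) := by
  rw [← mul_one_div u 3]
  exact (hasSum_alternatingExpTerm (by norm_num) hu).tsum_eq
end

section
/- For every real number s > 0, one has ∫₀^∞ e^{−st} · (2/√(πt)) · Σ_{k∈ℤ} k (−1)^{k−1} e^{−(k − 1/3)²/t} dt = sinh((2/3)√s) / (√s · cosh²(√s)). -/
/-!
Substituting `t = x²` and completing the square turns the Laplace transform of
`(2 / √(π t)) e^{-a²/t}` into `(4 / √π) e^{-2|a|√s} ∫₀^∞ e^{-s (x - c/x)²} dx` with `c = |a| / √s`.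
The Cauchy–Schlömilch substitution `u = x - c/x` (together with `x ↦ c/x`, which fixes the
integrand) shows that this half-line integral is half of the Gaussian integral `√(π/s)`, so the
`k`-th term of the sum contributes `(2/√s) e^{-2|k - 1/3|√s}`. These contributions are absolutely
summable, so sum and integral may be interchanged. Writing `q = e^{-2√s}`, the terms with `k ≥ 0`
and `k ≤ 0` are `e^{±(2/3)√s}` times the series `∑ n (-q)ⁿ = -q / (1 + q)²`, and
`q / (1 + q)² = 1 / (4 cosh² √s)`.
-/

open Real MeasureTheory Set

section CauchySchlomilch

variable {E : Type*} [NormedAddCommGroup E] [NormedSpace ℝ E] {c : ℝ}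

theorem hasDerivAt_const_div {x : ℝ} (hx : x ≠ 0) :
    HasDerivAt (fun x : ℝ => c / x) (-(c / x ^ 2)) x := by
  have := (hasDerivAt_inv hx).const_mul c
  simp only [← div_eq_mul_inv] at this
  exact this.congr_deriv (by ring)

theorem hasDerivAt_sub_const_div {x : ℝ} (hx : x ≠ 0) :
    HasDerivAt (fun x : ℝ => x - c / x) (1 + c / x ^ 2) x :=
  ((hasDerivAt_id x).sub (hasDerivAt_const_div hx)).congr_deriv (by ring)

theorem strictAntiOn_const_div (hc : 0 < c) : StrictAntiOn (fun x : ℝ => c / x) (Ioi 0) :=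
  fun _ hx _ _ hxy => div_lt_div_of_pos_left hc hx hxy

theorem strictMonoOn_sub_const_div (hc : 0 ≤ c) :
    StrictMonoOn (fun x : ℝ => x - c / x) (Ioi 0) := fun x hx y _ hxy => by
  linarith [div_le_div_of_nonneg_left hc hx hxy.le]

theorem image_const_div_Ioi (hc : 0 < c) : (fun x : ℝ => c / x) '' Ioi 0 = Ioi 0 :=
  (image_subset_iff.2 fun _ hx => div_pos hc hx).antisymm fun y hy =>
    ⟨c / y, div_pos hc hy, div_div_cancel₀ hc.ne'⟩

theorem image_sub_const_div_Ioi (hc : 0 < c) : (fun x : ℝ => x - c / x) '' Ioi 0 = univ := by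
  refine eq_univ_of_forall fun u => ?_
  have hroot : √(u ^ 2 + 4 * c) ^ 2 = u ^ 2 + 4 * c := sq_sqrt (by positivity)
  have hu : |u| < √(u ^ 2 + 4 * c) := by
    rw [← sqrt_sq_eq_abs]; exact sqrt_lt_sqrt (sq_nonneg u) (by linarith)
  -- the positive root of `x² - u x - c = 0`
  have hx : 0 < (u + √(u ^ 2 + 4 * c)) / 2 := by linarith [neg_abs_le u]
  refine ⟨_, hx, ?_⟩
  have : c / ((u + √(u ^ 2 + 4 * c)) / 2) = (u + √(u ^ 2 + 4 * c)) / 2 - u := by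
    rw [div_eq_iff hx.ne']; linear_combination (-1 / 4) * hroot
  simp only [this, sub_sub_cancel]

theorem integrableOn_Ioi_comp_sub_const_div {f : ℝ → E} (hf : Integrable f) (hc : 0 < c) :
    IntegrableOn (fun x => f (x - c / x)) (Ioi 0) := by
  have hJ : IntegrableOn (fun x => |1 + c / x ^ 2| • f (x - c / x)) (Ioi 0) := by
    rw [← integrableOn_image_iff_integrableOn_abs_deriv_smul measurableSet_Ioi
      (fun x hx => (hasDerivAt_sub_const_div (ne_of_gt hx)).hasDerivWithinAt)
      (strictMonoOn_sub_const_div hc.le).injOn, image_sub_const_div_Ioi hc]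
    exact hf.integrableOn
  have hbound : ∀ x, ‖|1 + c / x ^ 2|⁻¹‖ ≤ 1 := fun x => by
    rw [norm_inv, norm_abs_eq_norm, norm_of_nonneg (by positivity)]
    exact inv_le_one_of_one_le₀ (le_add_of_nonneg_right (by positivity))
  refine IntegrableOn.congr_fun (hJ.bdd_smul 1 (Measurable.aestronglyMeasurable (by fun_prop))
    (.of_forall hbound)) (fun x hx => ?_) measurableSet_Ioi
  have : |1 + c / x ^ 2| ≠ 0 := by positivity
  simp [smul_smul, inv_mul_cancel₀ this]

theorem integral_Ioi_comp_sub_const_div_of_even {f : ℝ → E} (hf : Integrable f)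
    (heven : ∀ u, f (-u) = f u) (hc : 0 < c) :
    (2 : ℝ) • ∫ x in Ioi 0, f (x - c / x) = ∫ u, f u := by
  set g : ℝ → E := fun x => f (x - c / x)
  have hg : IntegrableOn g (Ioi 0) := integrableOn_Ioi_comp_sub_const_div hf hc
  -- `x ↦ c / x` preserves `g` and turns `dx` into `(c / x²) dx`
  have hinv_eq :
      EqOn (fun x => |-(c / x ^ 2)| • g (c / x)) (fun x => (c / x ^ 2) • g x) (Ioi 0) :=
    fun x hx => by
      have : c / x - c / (c / x) = -(x - c / x) := by
        field_simp [hc.ne', (mem_Ioi.1 hx).ne']; ring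
      simp only [g, this, heven, abs_neg, abs_of_nonneg (by positivity : 0 ≤ c / x ^ 2)]
  have hinv_deriv :
      ∀ x ∈ Ioi (0 : ℝ), HasDerivWithinAt (fun x => c / x) (-(c / x ^ 2)) (Ioi 0) x :=
    fun x hx => (hasDerivAt_const_div (ne_of_gt hx)).hasDerivWithinAt
  have hinj := (strictAntiOn_const_div hc).injOn
  have hcg : IntegrableOn (fun x => (c / x ^ 2) • g x) (Ioi 0) := by
    refine IntegrableOn.congr_fun ?_ hinv_eq measurableSet_Ioi
    rw [← integrableOn_image_iff_integrableOn_abs_deriv_smul measurableSet_Ioi hinv_deriv hinj,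
      image_const_div_Ioi hc]
    exact hg
  have hcg_eq : ∫ x in Ioi 0, (c / x ^ 2) • g x = ∫ x in Ioi 0, g x := by
    rw [← setIntegral_congr_fun measurableSet_Ioi hinv_eq,
      ← integral_image_eq_integral_abs_deriv_smul measurableSet_Ioi hinv_deriv hinj,
      image_const_div_Ioi hc]
  calc (2 : ℝ) • ∫ x in Ioi 0, g x = ∫ x in Ioi 0, (1 + c / x ^ 2) • g x := by
        simp only [add_smul, one_smul, integral_add hg hcg, hcg_eq, two_smul]
    _ = ∫ x in Ioi 0, |1 + c / x ^ 2| • g x :=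
        setIntegral_congr_fun measurableSet_Ioi fun x _ => by
          rw [abs_of_nonneg (by positivity)]
    _ = ∫ u, f u := by
        rw [← integral_image_eq_integral_abs_deriv_smul measurableSet_Ioi
          (fun x hx => (hasDerivAt_sub_const_div (ne_of_gt hx)).hasDerivWithinAt)
          (strictMonoOn_sub_const_div hc.le).injOn, image_sub_const_div_Ioi hc, setIntegral_univ]

end CauchySchlomilch

section Laplace

variable {s a : ℝ}

theorem rpow_two_smul_laplace_integrand_eq (hs : 0 < s) {x : ℝ} (hx : 0 < x) :
    (|(2 : ℝ)| * x ^ ((2 : ℝ) - 1)) •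
        (exp (-s * x ^ (2 : ℝ)) * (2 / √(π * x ^ (2 : ℝ))) * exp (-a ^ 2 / x ^ (2 : ℝ))) =
      4 / √π * exp (-(2 * |a| * √s)) * exp (-s * (x - |a| / √s / x) ^ 2) := by
  have hexp : -s * x ^ 2 + -a ^ 2 / x ^ 2 = -(2 * |a| * √s) + -s * (x - |a| / √s / x) ^ 2 := by
    field_simp
    linear_combination (2 * x ^ 2 * |a| * √s - a ^ 2) * sq_sqrt hs.le + s * sq_abs a
  rw [show (2 : ℝ) - 1 = 1 by norm_num, rpow_one, rpow_two, abs_two, sqrt_mul pi_pos.le,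
    sqrt_sq hx.le]
  calc 2 * x * (exp (-s * x ^ 2) * (2 / (√π * x)) * exp (-a ^ 2 / x ^ 2))
      = 4 / √π * exp (-s * x ^ 2 + -a ^ 2 / x ^ 2) := by
        rw [exp_add]; field_simp; ring
    _ = _ := by rw [hexp, exp_add]; ring

theorem integrableOn_laplace_exp_neg_sq_div (hs : 0 < s) (ha : a ≠ 0) :
    IntegrableOn (fun t => exp (-s * t) * (2 / √(π * t)) * exp (-a ^ 2 / t)) (Ioi 0) := by
  rw [← integrableOn_Ioi_comp_rpow_iff _ two_ne_zero]
  refine IntegrableOn.congr_fun ?_ (fun x hx => (rpow_two_smul_laplace_integrand_eq hs hx).symm)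
    measurableSet_Ioi
  exact (integrableOn_Ioi_comp_sub_const_div (integrable_exp_neg_mul_sq hs)
    (by positivity : 0 < |a| / √s)).const_mul _

theorem integral_laplace_exp_neg_sq_div (hs : 0 < s) (ha : a ≠ 0) :
    ∫ t in Ioi 0, exp (-s * t) * (2 / √(π * t)) * exp (-a ^ 2 / t) =
      2 / √s * exp (-(2 * |a| * √s)) := by
  have hgauss := integral_Ioi_comp_sub_const_div_of_even (integrable_exp_neg_mul_sq hs)
    (fun u => by simp only [neg_sq]) (by positivity : 0 < |a| / √s)
  rw [integral_gaussian, smul_eq_mul, sqrt_div pi_pos.le] at hgauss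
  rw [← integral_comp_rpow_Ioi _ two_ne_zero,
    setIntegral_congr_fun measurableSet_Ioi fun x hx => rpow_two_smul_laplace_integrand_eq hs hx,
    integral_const_mul, eq_div_of_mul_eq two_ne_zero ((mul_comm _ _).trans hgauss)]
  field_simp
  ring

end Laplace

theorem integral_laplace_tsum_exp_neg_sq_div {ι : Type*} [Countable ι] {s : ℝ} {c a : ι → ℝ}
    (hs : 0 < s) (ha : ∀ i, a i ≠ 0) (hsum : Summable fun i => |c i| * exp (-(2 * |a i| * √s))) :
    ∫ t in Ioi 0, exp (-s * t) * (2 / √(π * t)) * ∑' i, c i * exp (-a i ^ 2 / t) =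
      2 / √s * ∑' i, c i * exp (-(2 * |a i| * √s)) := by
  set K : ι → ℝ → ℝ := fun i t => exp (-s * t) * (2 / √(π * t)) * exp (-a i ^ 2 / t)
  have hK_int (i : ι) : IntegrableOn (K i) (Ioi 0) := integrableOn_laplace_exp_neg_sq_div hs (ha i)
  have hK_integral (i : ι) : ∫ t in Ioi 0, K i t = 2 / √s * exp (-(2 * |a i| * √s)) :=
    integral_laplace_exp_neg_sq_div hs (ha i)
  have hnorm_sum : Summable fun i => ∫ t in Ioi 0, ‖c i * K i t‖ := by
    have hK_nonneg (i : ι) (t : ℝ) : 0 ≤ K i t := by positivity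
    simp_rw [norm_mul, norm_of_nonneg (hK_nonneg _ _), integral_const_mul, hK_integral,
      norm_eq_abs]
    exact (hsum.mul_left (2 / √s)).congr fun i => by ring
  calc ∫ t in Ioi 0, exp (-s * t) * (2 / √(π * t)) * ∑' i, c i * exp (-a i ^ 2 / t)
      = ∫ t in Ioi 0, ∑' i, c i * K i t := by
        congr! 2 with t
        rw [← tsum_mul_left]
        exact tsum_congr fun i => by ring
    _ = ∑' i, ∫ t in Ioi 0, c i * K i t :=
        (integral_tsum_of_summable_integral_norm (fun i => (hK_int i).const_mul (c i))
          hnorm_sum).symm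
    _ = 2 / √s * ∑' i, c i * exp (-(2 * |a i| * √s)) := by
        simp_rw [integral_const_mul, hK_integral, ← tsum_mul_left]
        exact tsum_congr fun i => by ring

section ThetaSeries

variable {x θ : ℝ}

-- The factor `n` makes this hold at `n = 0` too, where `|0 - θ| = θ`.
theorem natCast_mul_exp_abs_natCast_sub (hθ : θ ≤ 1) (n : ℕ) :
    (n : ℝ) * exp (-(2 * |(n : ℝ) - θ| * x)) = exp (2 * θ * x) * (n * exp (-(2 * x)) ^ n) := by
  rcases n with _ | m
  · simp
  have : |((m + 1 : ℕ) : ℝ) - θ| = m + 1 - θ := by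
    push_cast; exact abs_of_nonneg (by linarith [m.cast_nonneg (α := ℝ)])
  rw [this, ← exp_nat_mul, mul_left_comm, ← exp_add]
  push_cast
  ring_nf

theorem exp_abs_neg_natCast_sub (hθ : 0 ≤ θ) (n : ℕ) :
    exp (-(2 * |-(n : ℝ) - θ| * x)) = exp (-(2 * θ * x)) * exp (-(2 * x)) ^ n := by
  rw [show -(n : ℝ) - θ = -(n + θ) by ring, abs_neg, abs_of_nonneg (by positivity),
    ← exp_nat_mul, ← exp_add]
  ring_nf

theorem neg_one_zpow_natCast_sub_one (n : ℕ) : (-1 : ℝ) ^ ((n : ℤ) - 1) = -(-1) ^ n := by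
  simp [zpow_sub_one₀]

theorem neg_one_zpow_neg_natCast_sub_one (n : ℕ) : (-1 : ℝ) ^ (-(n : ℤ) - 1) = -(-1) ^ n := by
  simp [zpow_sub_one₀, zpow_neg, ← inv_pow]

theorem norm_exp_neg_two_mul_lt_one (hx : 0 < x) : ‖exp (-(2 * x))‖ < 1 := by
  rw [norm_of_nonneg (exp_pos _).le, exp_lt_one_iff]
  linarith

theorem exp_neg_two_mul_div_one_add_sq (x : ℝ) :
    exp (-(2 * x)) / (1 + exp (-(2 * x))) ^ 2 = 1 / (4 * cosh x ^ 2) := by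
  rw [show exp (-(2 * x)) = (exp x ^ 2)⁻¹ by rw [← exp_nat_mul, ← exp_neg]; ring_nf, cosh_eq,
    exp_neg]
  field_simp
  ring

theorem hasSum_intCast_mul_neg_one_zpow_mul_exp_abs_sub (hx : 0 < x) (hθ₀ : 0 ≤ θ) (hθ₁ : θ ≤ 1) :
    HasSum (fun k : ℤ => (k : ℝ) * (-1) ^ (k - 1) * exp (-(2 * |(k : ℝ) - θ| * x)))
      (sinh (2 * θ * x) / (2 * cosh x ^ 2)) := by
  set f : ℤ → ℝ := fun k => (k : ℝ) * (-1) ^ (k - 1) * exp (-(2 * |(k : ℝ) - θ| * x))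
  set q := exp (-(2 * x))
  have hgeom := hasSum_coe_mul_geometric_of_norm_lt_one
    ((norm_neg (exp (-(2 * x)))).trans_lt (norm_exp_neg_two_mul_lt_one hx))
  have hnat : HasSum (fun n : ℕ => f n) (-(exp (2 * θ * x) * (-q / (1 - -q) ^ 2))) :=
    (hgeom.mul_left (exp (2 * θ * x))).neg.congr_fun fun n => by
      simp only [f, Int.cast_natCast]
      rw [mul_right_comm, natCast_mul_exp_abs_natCast_sub hθ₁, neg_one_zpow_natCast_sub_one,
        neg_pow]
      ring
  have hneg : HasSum (fun n : ℕ => f (-n)) (exp (-(2 * θ * x)) * (-q / (1 - -q) ^ 2)) :=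
    (hgeom.mul_left (exp (-(2 * θ * x)))).congr_fun fun n => by
      simp only [f, Int.cast_neg, Int.cast_natCast]
      rw [exp_abs_neg_natCast_sub hθ₀, neg_one_zpow_neg_natCast_sub_one, neg_pow]
      ring
  have hvalue : -(exp (2 * θ * x) * (-q / (1 - -q) ^ 2)) + exp (-(2 * θ * x)) * (-q / (1 - -q) ^ 2)
      - f 0 = sinh (2 * θ * x) / (2 * cosh x ^ 2) := by
    simp only [f, Int.cast_zero, zero_mul, sub_zero, sub_neg_eq_add]
    rw [neg_div, exp_neg_two_mul_div_one_add_sq, sinh_eq]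
    field_simp
    ring
  exact hvalue ▸ hnat.of_nat_of_neg hneg

theorem summable_abs_intCast_mul_exp_abs_sub (hx : 0 < x) (hθ₀ : 0 ≤ θ) (hθ₁ : θ ≤ 1) :
    Summable fun k : ℤ => |(k : ℝ)| * exp (-(2 * |(k : ℝ) - θ| * x)) := by
  have hgeom := (hasSum_coe_mul_geometric_of_norm_lt_one (norm_exp_neg_two_mul_lt_one hx)).summable
  refine .of_nat_of_neg ?_ ?_
  · refine (hgeom.mul_left (exp (2 * θ * x))).congr fun n => ?_
    rw [Int.cast_natCast, abs_of_nonneg n.cast_nonneg, natCast_mul_exp_abs_natCast_sub hθ₁]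
  · refine (hgeom.mul_left (exp (-(2 * θ * x)))).congr fun n => ?_
    rw [Int.cast_neg, Int.cast_natCast, abs_neg, abs_of_nonneg n.cast_nonneg,
      exp_abs_neg_natCast_sub hθ₀]
    ring

end ThetaSeries

theorem intCast_sub_ne_zero_of_mem_Ioo {θ : ℝ} (hθ : θ ∈ Ioo 0 1) (k : ℤ) : (k : ℝ) - θ ≠ 0 := by
  intro h
  have h0 : (0 : ℝ) < k := by linarith [hθ.1]
  have h1 : (k : ℝ) < 1 := by linarith [hθ.2]
  norm_cast at h0 h1
  omega

theorem integral_laplace_theta_sum {s θ : ℝ} (hs : 0 < s) (hθ : θ ∈ Ioo 0 1) :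
    ∫ t in Ioi 0, exp (-s * t) * (2 / √(π * t)) *
        ∑' k : ℤ, (k : ℝ) * (-1 : ℝ) ^ (k - 1) * exp (-((k : ℝ) - θ) ^ 2 / t) =
      sinh (2 * θ * √s) / (√s * cosh √s ^ 2) := by
  have hss : 0 < √s := sqrt_pos.2 hs
  rw [integral_laplace_tsum_exp_neg_sq_div (c := fun k : ℤ => (k : ℝ) * (-1 : ℝ) ^ (k - 1))
      (a := fun k : ℤ => (k : ℝ) - θ) hs (intCast_sub_ne_zero_of_mem_Ioo hθ) ?summable,
    (hasSum_intCast_mul_neg_one_zpow_mul_exp_abs_sub hss hθ.1.le hθ.2.le).tsum_eq]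
  · field_simp
  · simp_rw [abs_mul, abs_neg_one_zpow, mul_one]
    exact summable_abs_intCast_mul_exp_abs_sub hss hθ.1.le hθ.2.le

/-- For every `s > 0`:
`∫₀^∞ e^{−st} (2/√(πt)) Σ_{k∈ℤ} k (−1)^{k−1} e^{−(k − 1/3)²/t} dt
  = sinh((2/3)√s) / (√s cosh²(√s))`. -/
theorem laplace_theta_sum (s : ℝ) (hs : 0 < s) :
    ∫ t in Set.Ioi (0 : ℝ),
        Real.exp (-s * t) * (2 / Real.sqrt (π * t)) *
          ∑' k : ℤ, (k : ℝ) * (-1 : ℝ) ^ (k - 1) * Real.exp (-((k : ℝ) - 1 / 3) ^ 2 / t) =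
      Real.sinh (2 / 3 * Real.sqrt s) / (Real.sqrt s * Real.cosh (Real.sqrt s) ^ 2) := by
  rw [integral_laplace_theta_sum hs (by norm_num), show 2 * (1 / 3 : ℝ) = 2 / 3 by norm_num]
end
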